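/- arXiv:1905.09830 — 3 statements merged into one kernel-verified Lean document; each statement's English description precedes it below -/
import Mathlib

section
/- Let V be a vector space over ℂ, let g ≥ 2 be a natural number, let F : V^g → ℂ be a symmetric g-multilinear form, and let S ⊆ V be any subset. Then the following are equivalent: (i) F(p_1, …, p_g) = 0 for all p_1, …, p_g ∈ S such that p_i = p_j for some pair of indices i ≠ j; (ii) F(p, …, p) = 0 for every vector p of the form p = λ_1 p_1 + ⋯ + λ_{g−1} p_{g−1} with λ_1, …, λ_{g−1} ∈ ℂ and p_1, …, p_{g−1} ∈ S. -/
/-!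
(i) ⇒ (ii): expanding `F (∑ λⱼ qⱼ, …, ∑ λⱼ qⱼ)` multilinearly, every term is a multiple of
`F (q ∘ r)` for some `r : Fin g → Fin (g - 1)`, and `r` repeats a value by pigeonhole.

(ii) ⇒ (i): by the polarization identity `g! • F v = ∑_T (-1)^|Tᶜ| • F (∑_{i ∈ T} vᵢ, …)`, it
suffices that `F` vanishes on the diagonal at each partial sum `∑_{i ∈ T} vᵢ`. If `v` has a
repeated entry, it takes at most `g - 1` values, so each partial sum is a combination of `g - 1`
points of `S`.
-/

open Finset Function
open scoped Nat

theorem Finset.sum_filter_superset_neg_one_pow_card_compl {ι : Type*} [Fintype ι] [DecidableEq ι]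
    (R : Finset ι) :
    ∑ T with R ⊆ T, (-1 : ℤ) ^ #Tᶜ = if R = univ then 1 else 0 := by
  have hcompl : ∑ T with R ⊆ T, (-1 : ℤ) ^ #Tᶜ = ∑ U ∈ Rᶜ.powerset, (-1 : ℤ) ^ #U :=
    sum_nbij' compl compl (by simp) (by simp [subset_compl_comm]) (by simp) (by simp) (by simp)
  simp [hcompl, sum_powerset_neg_one_pow_card]

theorem Finset.image_univ_eq_univ_iff_surjective {ι : Type*} [Fintype ι] [DecidableEq ι]
    {r : ι → ι} : univ.image r = univ ↔ Surjective r := by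
  simp [eq_univ_iff_forall, Surjective]

theorem Finset.sum_ite_surjective_eq_sum_perm {ι M : Type*} [Fintype ι] [DecidableEq ι]
    [AddCommMonoid M] (f : (ι → ι) → M) :
    ∑ r : ι → ι, (if Surjective r then f r else 0) = ∑ σ : Equiv.Perm ι, f σ := by
  rw [← sum_filter]
  refine (sum_bij (fun (σ : Equiv.Perm ι) _ => ⇑σ) (fun σ _ => by simpa using σ.surjective)
    (fun _ _ _ _ h => Equiv.coe_fn_injective h) (fun r hr => ?_) (fun _ _ => rfl)).symm
  have hr : Surjective r := by simpa using hr
  exact ⟨Equiv.ofBijective r ⟨Finite.injective_iff_surjective.2 hr, hr⟩, mem_univ _, rfl⟩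

theorem Finset.sum_comp_eq_sum_card_fiber_smul {ι κ M : Type*} [Fintype κ] [DecidableEq κ]
    [AddCommMonoid M] (s : Finset ι) (r : ι → κ) (q : κ → M) :
    ∑ i ∈ s, q (r i) = ∑ j, #{i ∈ s | r i = j} • q j := by
  simp [← sum_fiberwise' s r q]

theorem Function.exists_comp_eq_of_not_injective {ι β : Type*} [Fintype ι] {n : ℕ}
    (hn : Fintype.card ι = n + 1) {p : ι → β} (hp : ¬Injective p) :
    ∃ (q : Fin n → β) (r : ι → Fin n), Set.range q ⊆ Set.range p ∧ q ∘ r = p := by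
  classical
  have hcard : Fintype.card (univ.image p) ≤ Fintype.card (Fin n) := by
    have : #(univ.image p) < #(univ : Finset ι) :=
      card_image_le.lt_of_ne fun h => hp (by simpa using card_image_iff.1 h)
    simpa [hn] using this
  obtain ⟨e⟩ := Function.Embedding.nonempty_of_card_le hcard
  obtain ⟨i₀⟩ : Nonempty ι := Fintype.card_pos_iff.1 (by omega)
  have : Nonempty (univ.image p) := ⟨⟨p i₀, mem_image_of_mem p (mem_univ i₀)⟩⟩
  refine ⟨fun j => (invFun e j : univ.image p),
    fun i => e ⟨p i, mem_image_of_mem p (mem_univ i)⟩, ?_, ?_⟩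
  · rintro _ ⟨j, rfl⟩
    obtain ⟨i, -, hi⟩ := mem_image.1 (invFun e j).2
    exact ⟨i, hi⟩
  · funext i
    simp [leftInverse_invFun e.injective _]

namespace MultilinearMap

variable {R M N ι : Type*} [CommSemiring R] [AddCommMonoid M] [Module R M]
  [AddCommGroup N] [Module R N] [Fintype ι] [DecidableEq ι]

theorem sum_neg_one_pow_smul_map_sum_eq_factorial_smul (F : MultilinearMap R (fun _ : ι => M) N)
    (hF : ∀ (σ : Equiv.Perm ι) (v : ι → M), F (v ∘ σ) = F v) (v : ι → M) :
    ∑ T : Finset ι, (-1 : ℤ) ^ #Tᶜ • F (fun _ => ∑ i ∈ T, v i) = (Fintype.card ι)! • F v := by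
  have hexpand (T : Finset ι) :
      F (fun _ => ∑ i ∈ T, v i) = ∑ r ∈ Fintype.piFinset fun _ => T, F (v ∘ r) :=
    F.map_sum_finset (fun _ => v) fun _ => T
  calc ∑ T : Finset ι, (-1 : ℤ) ^ #Tᶜ • F (fun _ => ∑ i ∈ T, v i)
      = ∑ r : ι → ι, ∑ T with univ.image r ⊆ T, (-1 : ℤ) ^ #Tᶜ • F (v ∘ r) := by
        simp_rw [hexpand, smul_sum]
        exact sum_comm' fun T r => by simp [image_subset_iff]
    _ = ∑ r : ι → ι, (if Surjective r then F (v ∘ r) else 0) := by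
        refine sum_congr rfl fun r _ => ?_
        simp only [← sum_smul, sum_filter_superset_neg_one_pow_card_compl,
          image_univ_eq_univ_iff_surjective]
        split_ifs <;> simp
    _ = ∑ σ : Equiv.Perm ι, F v := by
        rw [sum_ite_surjective_eq_sum_perm (fun r => F (v ∘ r))]
        exact sum_congr rfl fun σ _ => hF σ v
    _ = (Fintype.card ι)! • F v := by simp [Fintype.card_perm]

theorem eq_zero_of_map_sum_eq_zero [IsAddTorsionFree N] (F : MultilinearMap R (fun _ : ι => M) N)
    (hF : ∀ (σ : Equiv.Perm ι) (v : ι → M), F (v ∘ σ) = F v) {v : ι → M}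
    (hv : ∀ T : Finset ι, F (fun _ => ∑ i ∈ T, v i) = 0) : F v = 0 := by
  have h := F.sum_neg_one_pow_smul_map_sum_eq_factorial_smul hF v
  simp only [hv, smul_zero, sum_const_zero] at h
  exact (nsmul_eq_zero_iff_right (Nat.factorial_ne_zero _)).1 h.symm

theorem map_sum_smul_eq_zero_of_map_comp_eq_zero {κ : Type*} [Fintype κ]
    (F : MultilinearMap R (fun _ : ι => M) N)
    (c : κ → R) (q : κ → M) (hq : ∀ r : ι → κ, F (q ∘ r) = 0) :
    F (fun _ => ∑ j, c j • q j) = 0 := by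
  rw [F.map_sum fun _ j => c j • q j]
  refine sum_eq_zero fun r _ => ?_
  rw [F.map_smul_univ (fun i => c (r i)) (fun i => q (r i))]
  exact smul_eq_zero_of_right _ (hq r)

end MultilinearMap

/-- Proposition 2.3 (multilinear-algebra content): for a symmetric `g`-multilinear
form `F` on a complex vector space `V` and any subset `S ⊆ V`, vanishing of
`F (p₁, …, p_g)` whenever the `pᵢ ∈ S` and two of them coincide is equivalent to
vanishing of `F (p, …, p)` for every linear combination `p` of `g - 1` points of `S`. -/
theorem symmetric_multilinear_vanishing_equiv
    (V : Type*) [AddCommGroup V] [Module ℂ V]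
    (g : ℕ) (hg : 2 ≤ g)
    (F : MultilinearMap ℂ (fun _ : Fin g => V) ℂ)
    (hF : ∀ (σ : Equiv.Perm (Fin g)) (v : Fin g → V), F (v ∘ σ) = F v)
    (S : Set V) :
    (∀ p : Fin g → V, (∀ i, p i ∈ S) →
        (∃ i j, i ≠ j ∧ p i = p j) → F p = 0) ↔
      (∀ (lam : Fin (g - 1) → ℂ) (q : Fin (g - 1) → V), (∀ i, q i ∈ S) →
        F (fun _ => ∑ i, lam i • q i) = 0) := by
  constructor
  · intro h lam q hq
    refine F.map_sum_smul_eq_zero_of_map_comp_eq_zero lam q fun r => h _ (fun i => hq (r i)) ?_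
    obtain ⟨i, j, hij, hr⟩ :=
      Fintype.exists_ne_map_eq_of_card_lt r (by simp only [Fintype.card_fin]; omega)
    exact ⟨i, j, hij, congrArg q hr⟩
  · rintro h p hpS ⟨a, b, hab, hpab⟩
    have hcard : Fintype.card (Fin g) = g - 1 + 1 := by simp only [Fintype.card_fin]; omega
    obtain ⟨q, r, hqp, rfl⟩ := exists_comp_eq_of_not_injective hcard fun hp => hab (hp hpab)
    refine F.eq_zero_of_map_sum_eq_zero hF fun T => ?_
    have hqS (j : Fin (g - 1)) : q j ∈ S := by
      obtain ⟨i, hi⟩ := hqp ⟨j, rfl⟩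
      exact hi ▸ hpS i
    simp only [comp_apply, sum_comp_eq_sum_card_fiber_smul, ← Nat.cast_smul_eq_nsmul ℂ]
    exact h _ q hqS
end

section
/- Let n, r ∈ ℕ and let Q ∈ ℂ[x_0, …, x_n] be a homogeneous polynomial of degree r. For a point P ∈ ℂ^{n+1} and l ∈ ℕ, say that Q vanishes at P with multiplicity at least l if for every multi-index α ∈ ℕ^{n+1} with |α| < l the iterated partial derivative ∂^α Q vanishes at P. Suppose P_1, P_2 ∈ ℂ^{n+1} are linearly independent, Q vanishes at P_1 with multiplicity at least l_1, and Q vanishes at P_2 with multiplicity at least l_2, where l_1, l_2 ∈ ℕ. Then for all s, t ∈ ℂ, the polynomial Q vanishes at the point s·P_1 + t·P_2 with multiplicity at least l_1 + l_2 − r (the conclusion being vacuous when l_1 + l_2 ≤ r). -/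
/-- The iterated partial derivative `∂^α Q` of a multivariate polynomial,
where `α` is a multi-index. -/
noncomputable def pderivMulti {n : ℕ} (α : Fin n → ℕ)
    (Q : MvPolynomial (Fin n) ℂ) : MvPolynomial (Fin n) ℂ :=
  (List.finRange n).foldr (fun i q => (fun p => MvPolynomial.pderiv i p)^[α i] q) Q

/-- `Q` vanishes at the point `P` with multiplicity at least `l`: every iterated
partial derivative `∂^α Q` with `|α| < l` vanishes at `P`. -/
def VanishesWithMultAtLeast {n : ℕ} (Q : MvPolynomial (Fin n) ℂ)
    (P : Fin n → ℂ) (l : ℕ) : Prop :=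
  ∀ α : Fin n → ℕ, (∑ i, α i) < l → MvPolynomial.eval P (pderivMulti α Q) = 0

/-!
Restricting `Q` to the plane spanned by `P₁` and `P₂` gives the binary form
`F(x, y) = Q(x • P₁ + y • P₂)` of degree `r`. Up to the factor `b!`, the coefficient of `x^a y^b`
in `F` is the value at `P₁` of the `b`-th derivative of `Q` in the direction `P₂`, so it vanishes
when `b < l₁`; symmetrically it vanishes when `a < l₂`. As `a + b = r < l₁ + l₂`, every coefficient
vanishes and `F = 0`. Applied to `∂^α Q`, which is homogeneous of degree `r - |α|` and vanishes to
order `lᵢ - |α|` at `Pᵢ`, this gives the claim.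
-/

theorem List.prod_map_pow_add_of_commute {M ι : Type*} [Monoid M] (L : List ι) (f : ι → M)
    (hf : ∀ i j, Commute (f i) (f j)) (a b : ι → ℕ) :
    (L.map fun i => f i ^ (a i + b i)).prod
      = (L.map fun i => f i ^ a i).prod * (L.map fun i => f i ^ b i).prod := by
  induction L with
  | nil => simp
  | cons i L ih =>
    have hcomm : Commute (f i ^ b i) (L.map fun j => f j ^ a j).prod :=
      Commute.list_prod_right _ _ fun x hx => by
        obtain ⟨j, -, rfl⟩ := List.mem_map.mp hx
        exact (hf i j).pow_pow _ _
    simp only [List.map_cons, List.prod_cons]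
    rw [ih, pow_add, mul_assoc, ← mul_assoc (f i ^ b i), hcomm.eq]
    simp only [mul_assoc]

namespace MvPolynomial

open Finsupp

section General

variable {R σ : Type*}

theorem commute_pderiv [CommRing R] (i j : σ) :
    Commute (pderiv (R := R) i).toLinearMap (pderiv j).toLinearMap := by
  classical
  -- The commutator of two derivations is a derivation, and this one kills every `X k`.
  have : ⁅pderiv i, pderiv j⁆ = (0 : Derivation R (MvPolynomial σ R) (MvPolynomial σ R)) :=
    derivation_ext fun k => by
      rw [Derivation.commutator_apply]; simp [pderiv_X, Pi.single_apply, apply_ite]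
  rw [commute_iff_lie_eq, ← Derivation.commutator_coe_linear_map, this,
    Derivation.coe_zero_linearMap]

variable [CommSemiring R] {p : MvPolynomial σ R} {n : ℕ}

theorem coeff_iterate_pderiv [DecidableEq σ] (i : σ) (k : ℕ) (p : MvPolynomial σ R)
    (d : σ →₀ ℕ) :
    coeff d ((pderiv i)^[k] p) = (d i + k).descFactorial k • coeff (d + single i k) p := by
  induction k generalizing d with
  | zero => simp
  | succ k ih =>
    rw [Function.iterate_succ_apply', coeff_pderiv, ih, add_assoc, ← single_add, add_comm 1 k,
      Nat.descFactorial_succ]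
    simp only [Finsupp.add_apply, single_eq_same, nsmul_eq_mul]
    rw [show d i + 1 + k = d i + (k + 1) by ring, show d i + (k + 1) - k = d i + 1 by omega]
    push_cast; ring

theorem IsHomogeneous.iterate_pderiv (hp : p.IsHomogeneous n) (i : σ) (k : ℕ) :
    ((pderiv i)^[k] p).IsHomogeneous (n - k) := by
  induction k with
  | zero => simpa using hp
  | succ k ih =>
    rw [Function.iterate_succ_apply', ← Nat.sub_sub]
    exact ih.pderiv

theorem IsHomogeneous.iterate_pderiv_eq_zero (hp : p.IsHomogeneous n) (i : σ) {k : ℕ}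
    (hk : n < k) : (pderiv i)^[k] p = 0 := by
  classical
  ext d
  rw [coeff_iterate_pderiv, hp.coeff_eq_zero, smul_zero, coeff_zero]
  simp only [map_add, degree_single]
  omega

theorem IsHomogeneous.degree_eq_of_coeff_ne_zero (hp : p.IsHomogeneous n) {d : σ →₀ ℕ}
    (hd : coeff d p ≠ 0) : d.degree = n := by
  rw [degree_eq_weight_one]
  exact hp hd

theorem IsHomogeneous.eval_single_one [Fintype σ] [DecidableEq σ] (hp : p.IsHomogeneous n)
    (i : σ) :
    eval (Pi.single i 1) p = coeff (single i n) p := by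
  rw [eval_eq', Finset.sum_eq_single (single i n)]
  · simp [Pi.single_apply, single_apply]
  · intro d hd hne
    obtain ⟨j, hji, hj⟩ : ∃ j ≠ i, d j ≠ 0 := by
      by_contra! h
      have hd' : d = single i (d i) := by
        ext j
        by_cases hji : j = i
        · simp [hji]
        · simp [h j hji, Ne.symm hji]
      have := hp.degree_eq_of_coeff_ne_zero (mem_support_iff.mp hd)
      rw [hd', degree_single] at this
      exact hne (hd'.trans (by rw [this]))
    rw [Finset.prod_eq_zero (Finset.mem_univ j) (by simp [hji, hj]), mul_zero]
  · intro h
    rw [notMem_support_iff.mp h, zero_mul]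

theorem IsHomogeneous.eval_single_one_iterate_pderiv [Fintype σ] [DecidableEq σ]
    (hp : p.IsHomogeneous n) {i j : σ} (hij : i ≠ j) (k : ℕ) :
    eval (Pi.single i 1) ((pderiv j)^[k] p) =
      k.factorial • coeff (single i (n - k) + single j k) p := by
  rw [(hp.iterate_pderiv j k).eval_single_one, coeff_iterate_pderiv,
    single_eq_of_ne hij.symm, zero_add, Nat.descFactorial_self]

end General

section BinaryForm

variable {R : Type*} [CommRing R] [IsDomain R] [CharZero R]

theorem eq_zero_of_eval_single_one_iterate_pderiv {F : MvPolynomial (Fin 2) R} {m l₀ l₁ : ℕ}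
    (hF : F.IsHomogeneous m) (hm : m < l₀ + l₁)
    (h₀ : ∀ k < l₀, eval (Pi.single 0 1) ((pderiv 1)^[k] F) = 0)
    (h₁ : ∀ k < l₁, eval (Pi.single 1 1) ((pderiv 0)^[k] F) = 0) : F = 0 := by
  have key : ∀ {i j : Fin 2}, i ≠ j → ∀ k, eval (Pi.single i 1) ((pderiv j)^[k] F) = 0 →
      coeff (single i (m - k) + single j k) F = 0 := fun hij k h => by
    rwa [hF.eval_single_one_iterate_pderiv hij, nsmul_eq_mul, mul_eq_zero,
      or_iff_right (by exact_mod_cast k.factorial_ne_zero)] at h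
  ext d
  rw [coeff_zero]
  by_contra hd
  have hdeg : d 0 + d 1 = m := by
    rw [← hF.degree_eq_of_coeff_ne_zero hd, degree_eq_sum, Fin.sum_univ_two]
  have hd_eq : d = single 0 (d 0) + single 1 (d 1) := by
    ext k; fin_cases k <;> simp
  by_cases hd₁ : d 1 < l₀
  · have := key (i := 0) (j := 1) (by decide) (d 1) (h₀ _ hd₁)
    rw [← hdeg, Nat.add_sub_cancel, ← hd_eq] at this
    exact hd this
  · have := key (i := 1) (j := 0) (by decide) (d 0) (h₁ _ (by omega))
    rw [← hdeg, Nat.add_sub_cancel_left, add_comm, ← hd_eq] at this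
    exact hd this

end BinaryForm

section RestrictToSpan

variable {R σ ι : Type*} [CommSemiring R] [Fintype ι]

noncomputable def dirDeriv [Fintype σ] (v : σ → R) :
    Derivation R (MvPolynomial σ R) (MvPolynomial σ R) :=
  ∑ i, v i • pderiv i

theorem dirDeriv_apply [Fintype σ] (v : σ → R) (p : MvPolynomial σ R) :
    dirDeriv v p = ∑ i, v i • pderiv i p := by
  rw [dirDeriv, ← Derivation.coeFnAddMonoidHom_apply, map_sum, Finset.sum_apply]
  rfl

theorem dirDeriv_X [Fintype σ] (v : σ → R) (i : σ) : dirDeriv v (X i) = C (v i) := by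
  classical
  simp [dirDeriv_apply, pderiv_X, Pi.single_apply, smul_eq_C_mul]

noncomputable def restrictToSpan (P : ι → σ → R) : MvPolynomial σ R →ₐ[R] MvPolynomial ι R :=
  aeval fun i => ∑ k, C (P k i) * X k

variable (P : ι → σ → R)

theorem eval_restrictToSpan (x : ι → R) (p : MvPolynomial σ R) :
    eval x (restrictToSpan P p) = eval (∑ k, x k • P k) p := by
  rw [restrictToSpan, ← aeval_eq_eval, comp_aeval_apply, aeval_eq_eval]
  congr 2 with i
  simp [Finset.sum_apply, mul_comm]

theorem IsHomogeneous.restrictToSpan {p : MvPolynomial σ R} {n : ℕ} (hp : p.IsHomogeneous n) :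
    (restrictToSpan P p).IsHomogeneous n := by
  rw [MvPolynomial.restrictToSpan]
  simpa only [one_mul] using hp.aeval _ fun i =>
    IsHomogeneous.sum _ _ _ fun k _ => isHomogeneous_C_mul_X (P k i) k

theorem pderiv_restrictToSpan_X (k : ι) (i : σ) :
    pderiv k (restrictToSpan P (X i)) = C (P k i) := by
  classical
  simp [restrictToSpan, pderiv_X, Pi.single_apply]

theorem pderiv_restrictToSpan [Fintype σ] (k : ι) (p : MvPolynomial σ R) :
    pderiv k (restrictToSpan P p) = restrictToSpan P (dirDeriv (P k) p) := by
  classical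
  induction p using induction_on with
  | C a => simp [restrictToSpan]
  | add p q hp hq => simp only [map_add, hp, hq]
  | mul_X p i hp =>
    rw [map_mul, pderiv_mul, hp, pderiv_restrictToSpan_X, Derivation.leibniz, dirDeriv_X,
      map_add, smul_eq_mul, smul_eq_mul, map_mul, map_mul, algHom_C, algebraMap_eq]
    ring

theorem iterate_pderiv_restrictToSpan [Fintype σ] (k : ι) (j : ℕ) (p : MvPolynomial σ R) :
    (pderiv k)^[j] (restrictToSpan P p) = restrictToSpan P ((dirDeriv (P k))^[j] p) :=
  ((Function.Semiconj.iterate_right (fun q => (pderiv_restrictToSpan P k q).symm) j) p).symm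

theorem eval_single_one_restrictToSpan [DecidableEq ι] (k : ι) (p : MvPolynomial σ R) :
    eval (Pi.single k 1) (restrictToSpan P p) = eval (P k) p := by
  simp [eval_restrictToSpan, Pi.single_apply, ite_smul]

end RestrictToSpan

section PderivPow

variable {R σ : Type*} [CommSemiring R] {p : MvPolynomial σ R} {n : ℕ}

theorem IsHomogeneous.list_prod_pderiv_pow (hp : p.IsHomogeneous n) (α : σ → ℕ) (L : List σ) :
    ((L.map fun i => (pderiv i).toLinearMap ^ α i).prod p).IsHomogeneous (n - (L.map α).sum) := by
  induction L with
  | nil => simpa using hp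
  | cons j L ih =>
    rw [List.map_cons, List.prod_cons, Module.End.mul_apply, Module.End.pow_apply,
      List.map_cons, List.sum_cons, add_comm, ← Nat.sub_sub]
    exact ih.iterate_pderiv j (α j)

theorem IsHomogeneous.list_prod_pderiv_pow_eq_zero (hp : p.IsHomogeneous n) (α : σ → ℕ)
    (L : List σ) (hL : n < (L.map α).sum) :
    (L.map fun i => (pderiv i).toLinearMap ^ α i).prod p = 0 := by
  induction L with
  | nil => simp at hL
  | cons j L ih =>
    rw [List.map_cons, List.prod_cons, Module.End.mul_apply, Module.End.pow_apply]
    rw [List.map_cons, List.sum_cons] at hL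
    by_cases hnL : n < (L.map α).sum
    · rw [ih hnL, iterate_map_zero]
    · exact (hp.list_prod_pderiv_pow α L).iterate_pderiv_eq_zero j (by omega)

end PderivPow

end MvPolynomial

open MvPolynomial

section PderivMulti

variable {n : ℕ}

noncomputable def pderivMultiₗ (α : Fin n → ℕ) : Module.End ℂ (MvPolynomial (Fin n) ℂ) :=
  ((List.finRange n).map fun i => (pderiv i).toLinearMap ^ α i).prod

theorem coe_pderivMultiₗ (α : Fin n → ℕ) : ⇑(pderivMultiₗ α) = pderivMulti α := by
  funext Q
  unfold pderivMultiₗ pderivMulti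
  induction List.finRange n with
  | nil => rfl
  | cons i L ih =>
    rw [List.map_cons, List.prod_cons, Module.End.mul_apply, ih, Module.End.pow_apply,
      List.foldr_cons]
    rfl

theorem pderivMulti_zero (Q : MvPolynomial (Fin n) ℂ) : pderivMulti 0 Q = Q := by
  simp [← coe_pderivMultiₗ, pderivMultiₗ]

theorem pderivMulti_add (α β : Fin n → ℕ) (Q : MvPolynomial (Fin n) ℂ) :
    pderivMulti (α + β) Q = pderivMulti α (pderivMulti β Q) := by
  simp only [← coe_pderivMultiₗ, pderivMultiₗ, Pi.add_apply]
  rw [List.prod_map_pow_add_of_commute _ _ (fun i j => commute_pderiv i j), Module.End.mul_apply]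

theorem pderivMulti_single (i : Fin n) (Q : MvPolynomial (Fin n) ℂ) :
    pderivMulti (Pi.single i 1) Q = pderiv i Q := by
  rw [← coe_pderivMultiₗ, pderivMultiₗ, List.prod_map_eq_pow_single i]
  · simp [List.count_finRange]
  · intro j hj _
    simp [hj]

theorem isHomogeneous_pderivMulti {Q : MvPolynomial (Fin n) ℂ} {m : ℕ} (hQ : Q.IsHomogeneous m)
    (α : Fin n → ℕ) : (pderivMulti α Q).IsHomogeneous (m - ∑ i, α i) := by
  rw [← coe_pderivMultiₗ, Fin.sum_univ_def]
  exact hQ.list_prod_pderiv_pow α _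

theorem pderivMulti_eq_zero_of_isHomogeneous {Q : MvPolynomial (Fin n) ℂ} {m : ℕ}
    (hQ : Q.IsHomogeneous m) {α : Fin n → ℕ} (hα : m < ∑ i, α i) : pderivMulti α Q = 0 := by
  rw [← coe_pderivMultiₗ]
  rw [Fin.sum_univ_def] at hα
  exact hQ.list_prod_pderiv_pow_eq_zero α _ hα

end PderivMulti

namespace VanishesWithMultAtLeast

variable {n : ℕ} {Q : MvPolynomial (Fin n) ℂ} {P : Fin n → ℂ} {l : ℕ}

theorem eval_eq_zero (h : VanishesWithMultAtLeast Q P l) (hl : 0 < l) : eval P Q = 0 := by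
  simpa [pderivMulti_zero] using h 0 (by simpa using hl)

theorem pderivMulti (h : VanishesWithMultAtLeast Q P l) (β : Fin n → ℕ) :
    VanishesWithMultAtLeast (pderivMulti β Q) P (l - ∑ i, β i) := by
  intro α hα
  rw [← pderivMulti_add]
  apply h
  simp only [Pi.add_apply, Finset.sum_add_distrib]
  omega

theorem pderiv (h : VanishesWithMultAtLeast Q P l) (i : Fin n) :
    VanishesWithMultAtLeast (pderiv i Q) P (l - 1) := by
  simpa [pderivMulti_single] using h.pderivMulti (Pi.single i 1)

theorem dirDeriv (h : VanishesWithMultAtLeast Q P l) (v : Fin n → ℂ) :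
    VanishesWithMultAtLeast (MvPolynomial.dirDeriv v Q) P (l - 1) := by
  intro α hα
  rw [dirDeriv_apply, ← coe_pderivMultiₗ, map_sum, map_sum]
  refine Finset.sum_eq_zero fun i _ => ?_
  rw [map_smul, smul_eval, coe_pderivMultiₗ, h.pderiv i α hα, mul_zero]

theorem iterate_dirDeriv (h : VanishesWithMultAtLeast Q P l) (v : Fin n → ℂ) (k : ℕ) :
    VanishesWithMultAtLeast ((MvPolynomial.dirDeriv v)^[k] Q) P (l - k) := by
  induction k with
  | zero => simpa using h
  | succ k ih =>
    rw [Function.iterate_succ_apply', ← Nat.sub_sub]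
    exact ih.dirDeriv v

end VanishesWithMultAtLeast

theorem eval_smul_add_smul_eq_zero {n m l₁ l₂ : ℕ} {Q : MvPolynomial (Fin n) ℂ}
    (hQ : Q.IsHomogeneous m) {A B : Fin n → ℂ} (hA : VanishesWithMultAtLeast Q A l₁)
    (hB : VanishesWithMultAtLeast Q B l₂) (hm : m < l₁ + l₂) (s t : ℂ) :
    eval (s • A + t • B) Q = 0 := by
  have hF : restrictToSpan ![A, B] Q = 0 := by
    refine eq_zero_of_eval_single_one_iterate_pderiv (hQ.restrictToSpan _) hm
      (fun k hk => ?_) (fun k hk => ?_)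
    · rw [iterate_pderiv_restrictToSpan, eval_single_one_restrictToSpan]
      exact (hA.iterate_dirDeriv B k).eval_eq_zero (by omega)
    · rw [iterate_pderiv_restrictToSpan, eval_single_one_restrictToSpan]
      exact (hB.iterate_dirDeriv A k).eval_eq_zero (by omega)
  simpa [eval_restrictToSpan, Fin.sum_univ_two] using congrArg (eval ![s, t]) hF

theorem vanishing_forms_general (n r : ℕ) (Q : MvPolynomial (Fin (n + 1)) ℂ)
    (hQ : Q.IsHomogeneous r)
    (P₁ P₂ : Fin (n + 1) → ℂ)
    (l₁ l₂ : ℕ)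
    (h₁ : VanishesWithMultAtLeast Q P₁ l₁)
    (h₂ : VanishesWithMultAtLeast Q P₂ l₂) :
    ∀ s t : ℂ, VanishesWithMultAtLeast Q (s • P₁ + t • P₂) (l₁ + l₂ - r) := by
  intro s t α hα
  by_cases hαr : ∑ i, α i ≤ r
  · exact eval_smul_add_smul_eq_zero (isHomogeneous_pderivMulti hQ α) (h₁.pderivMulti α)
      (h₂.pderivMulti α) (by omega) s t
  · rw [pderivMulti_eq_zero_of_isHomogeneous hQ (by omega), map_zero]

/-- Lemma 5.3: a homogeneous form of degree `r` vanishing at two linearly independent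
points `P₁`, `P₂` with multiplicities `l₁`, `l₂` vanishes with multiplicity at least
`l₁ + l₂ - r` at every point `s • P₁ + t • P₂` of the line through them. -/
theorem vanishing_forms (n r : ℕ) (Q : MvPolynomial (Fin (n + 1)) ℂ)
    (hQ : Q.IsHomogeneous r)
    (P₁ P₂ : Fin (n + 1) → ℂ)
    (hind : LinearIndependent ℂ ![P₁, P₂])
    (l₁ l₂ : ℕ)
    (h₁ : VanishesWithMultAtLeast Q P₁ l₁)
    (h₂ : VanishesWithMultAtLeast Q P₂ l₂) :
    ∀ s t : ℂ, VanishesWithMultAtLeast Q (s • P₁ + t • P₂) (l₁ + l₂ - r) :=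
  vanishing_forms_general n r Q hQ P₁ P₂ l₁ l₂ h₁ h₂
end

section
/- Let m ≥ 1 and let a_0, …, a_m be pairwise distinct complex numbers. For t ∈ ℂ ∖ {a_0, …, a_m}, let γ(t) ∈ ℙ^m(ℂ) be the projective point [1/(t−a_0) : ⋯ : 1/(t−a_m)]. Let Cr be the standard Cremona inversion, defined on points with all homogeneous coordinates nonzero by Cr([x_0 : ⋯ : x_m]) = [x_0^{−1} : ⋯ : x_m^{−1}], and let π be the linear projection from the point [1 : ⋯ : 1], given by π([x_0 : ⋯ : x_m]) = [x_1 − x_0 : x_2 − x_0 : ⋯ : x_m − x_0] ∈ ℙ^{m−1}(ℂ), defined on points not equal to [1 : ⋯ : 1]. Then the composition π ∘ Cr contracts the curve γ to a single point: for every t ∈ ℂ ∖ {a_0, …, a_m}, the point Cr(γ(t)) is defined and distinct from [1 : ⋯ : 1], and π(Cr(γ(t))) = [a_0 − a_1 : a_0 − a_2 : ⋯ : a_0 − a_m]. -/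
/-!
The Cremona inversion undoes the reciprocals: `Cr(γ(t)) = t • (1, …, 1) - a`. So `Cr ∘ γ` is a
line through the centre `[1 : ⋯ : 1]` of the projection, and projecting from that point removes
the dependence on `t`. The line misses the centre itself because `a` is injective.
-/

/-- The standard Cremona inversion, on the level of homogeneous coordinate vectors:
`[x₀ : ⋯ : x_m] ↦ [x₀⁻¹ : ⋯ : x_m⁻¹]` (defined on points with all coordinates nonzero). -/
noncomputable def cremona {m : ℕ} (x : Fin (m + 1) → ℂ) : Fin (m + 1) → ℂ :=
  fun i => (x i)⁻¹

theorem cremona_one_div_sub {m : ℕ} (a : Fin (m + 1) → ℂ) (t : ℂ) :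
    cremona (fun i => 1 / (t - a i)) = fun i => t - a i := by
  funext i
  exact (congrArg Inv.inv (one_div _)).trans (inv_inv _)

theorem not_exists_eq_smul_const_of_ne {ι R : Type*} [MulOneClass R] {v : ι → R} {i j : ι}
    (h : v i ≠ v j) : ¬ ∃ k : R, v = k • fun _ => 1 := by
  rintro ⟨k, rfl⟩
  exact h rfl

/-- Lemma 4.4 ('composition_contracts'): the composition `π ∘ Cr` of the Cremona
inversion and the linear projection `π([x₀ : ⋯ : x_m]) = [x₁ - x₀ : ⋯ : x_m - x₀]`
from the point `[1 : ⋯ : 1]` contracts the rational normal curve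
`γ(t) = [1/(t-a₀) : ⋯ : 1/(t-a_m)]` to the single point
`[a₀ - a₁ : a₀ - a₂ : ⋯ : a₀ - a_m]`. -/
theorem composition_contracts (m : ℕ) (hm : 1 ≤ m) (a : Fin (m + 1) → ℂ)
    (ha : Function.Injective a) (t : ℂ) (ht : ∀ i, t ≠ a i) :
    (∀ i, (1 / (t - a i)) ≠ 0) ∧
    (¬ ∃ k : ℂ, cremona (fun i => 1 / (t - a i)) = k • (fun _ => (1 : ℂ))) ∧
    (∃ k : ℂ, k ≠ 0 ∧
      (fun i : Fin m =>
          cremona (fun j => 1 / (t - a j)) i.succ - cremona (fun j => 1 / (t - a j)) 0)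
        = k • fun i : Fin m => a 0 - a i.succ) := by
  rw [cremona_one_div_sub]
  refine ⟨fun i => one_div_ne_zero (sub_ne_zero.2 (ht i)), ?_, 1, one_ne_zero, ?_⟩
  · have h01 : (0 : Fin (m + 1)) ≠ (⟨0, hm⟩ : Fin m).succ := (Fin.succ_ne_zero _).symm
    exact not_exists_eq_smul_const_of_ne fun h => h01 (ha (sub_right_injective h))
  · rw [one_smul]
    funext i
    exact sub_sub_sub_cancel_left _ _ _
end
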